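/- Let (M, d) be a length space containing path-connected sets X_1, …, X_n (n ≥ 1). Then for every ε > 0 there exist an integer m with 1 ≤ m ≤ n and path-connected sets Y_1, …, Y_m that are pairwise at distance at least ε, such that X_1 ∪ ⋯ ∪ X_n ⊆ Y_1 ∪ ⋯ ∪ Y_m ⊆ N^{(n−m)ε}[X_1] ∪ ⋯ ∪ N^{(n−m)ε}[X_n]. -/
import Mathlib


open Set ENNReal

variable {M : Type*} [MetricSpace M]

/-- The arc length (total variation on `[0,1]`) of a parametrised path `f : ℝ → M`. -/
noncomputable def pathLength (f : ℝ → M) : ℝ≥0∞ :=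
  eVariationOn f (Set.Icc 0 1)

/-- `f` is a (parametrised) path from the set `X` to the set `Y`. -/
def IsPathFromTo (f : ℝ → M) (X Y : Set M) : Prop :=
  ContinuousOn f (Set.Icc 0 1) ∧ f 0 ∈ X ∧ f 1 ∈ Y

/-- A metric space is a length space if any two points at distance `d` are joined by paths
of arc length arbitrarily close to `d`. -/
def IsLengthSpace (M : Type*) [MetricSpace M] : Prop :=
  ∀ x y : M, ∀ ε : ℝ, 0 < ε → ∃ f : ℝ → M,
    ContinuousOn f (Set.Icc 0 1) ∧ f 0 = x ∧ f 1 = y ∧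
    pathLength f ≤ ENNReal.ofReal (dist x y + ε)

/-- `N^r[X]`: the set of points joined to `X` by a path of arc length at most `r`. -/
def pathNbhd (X : Set M) (r : ℝ) : Set M :=
  {a | ∃ f : ℝ → M, ContinuousOn f (Set.Icc 0 1) ∧ f 0 = a ∧ f 1 ∈ X ∧
    pathLength f ≤ ENNReal.ofReal r}

/-- The path-distance between the sets `X` and `Y` is at least `K`: every path from `X` to `Y`
has arc length at least `K`. -/
def PathDistGE (X Y : Set M) (K : ℝ) : Prop :=
  ∀ f : ℝ → M, IsPathFromTo f X Y → ENNReal.ofReal K ≤ pathLength f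

/-- A set `S` is path-connected if any two of its points are joined by a path inside `S`. -/
def IsPathConnSet (S : Set M) : Prop :=
  ∀ x ∈ S, ∀ y ∈ S, JoinedIn S x y


/-! ### Auxiliary lemmas -/

lemma subset_pathNbhd' {X : Set M} (r : ℝ) : X ⊆ pathNbhd X r := by
  intro a ha
  refine ⟨fun _ => a, continuousOn_const, rfl, ha, ?_⟩
  have : pathLength (fun _ : ℝ => a) = 0 :=
    eVariationOn.constant_on (by simp [Set.Subsingleton])
  simp [this]

lemma pathNbhd_mono_set {X Y : Set M} {r : ℝ} (h : X ⊆ Y) : pathNbhd X r ⊆ pathNbhd Y r := by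
  rintro a ⟨f, hf, h0, h1, hl⟩; exact ⟨f, hf, h0, h h1, hl⟩

lemma pathNbhd_mono_r {X : Set M} {r r' : ℝ} (h : r ≤ r') : pathNbhd X r ⊆ pathNbhd X r' := by
  rintro a ⟨f, hf, h0, h1, hl⟩
  exact ⟨f, hf, h0, h1, hl.trans (ENNReal.ofReal_le_ofReal h)⟩

lemma pathNbhd_union {X Y : Set M} {r : ℝ} :
    pathNbhd (X ∪ Y) r ⊆ pathNbhd X r ∪ pathNbhd Y r := by
  rintro a ⟨f, hf, h0, (h1 | h1), hl⟩
  · exact Or.inl ⟨f, hf, h0, h1, hl⟩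
  · exact Or.inr ⟨f, hf, h0, h1, hl⟩

lemma image_subset_pathNbhd_endpoint {f : ℝ → M} (hf : ContinuousOn f (Icc 0 1)) {r : ℝ}
    (hr : pathLength f ≤ ENNReal.ofReal r) {t : ℝ} (ht : t ∈ Icc (0:ℝ) 1) :
    f t ∈ pathNbhd {f 1} r := by
  have hmaps : MapsTo (fun s : ℝ => t + s * (1 - t)) (Icc 0 1) (Icc 0 1) := by
    intro s hs
    simp only [mem_Icc] at hs ht ⊢
    constructor
    · nlinarith [ht.1, ht.2, hs.1, hs.2]
    · nlinarith [ht.1, ht.2, hs.1, hs.2]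
  refine ⟨fun s => f (t + s * (1 - t)), ?_, by simp, ?_, ?_⟩
  · exact hf.comp (by fun_prop) hmaps
  · have : t + 1 * (1 - t) = 1 := by ring
    simp [this]
  · have hmono : MonotoneOn (fun s : ℝ => t + s * (1 - t)) (Icc 0 1) := by
      intro a _ b _ hab
      have : (1:ℝ) - t ≥ 0 := by linarith [ht.2]
      dsimp only
      nlinarith
    calc pathLength (fun s => f (t + s * (1 - t)))
        = eVariationOn (f ∘ fun s : ℝ => t + s * (1 - t)) (Icc 0 1) := rfl
      _ ≤ eVariationOn f (Icc 0 1) :=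
          eVariationOn.comp_le_of_monotoneOn f _ hmono hmaps
      _ ≤ ENNReal.ofReal r := hr

lemma pathNbhd_trans {X : Set M} {r s : ℝ} (hr : 0 ≤ r) (hs : 0 ≤ s) :
    pathNbhd (pathNbhd X s) r ⊆ pathNbhd X (r + s) := by
  classical
  rintro a ⟨f, hf, hf0, hf1, hflen⟩
  obtain ⟨g, hg, hg0, hg1, hglen⟩ := hf1
  set h : ℝ → M := fun t => if t ≤ 1/2 then f (2*t) else g (2*t - 1) with hh
  have heq1 : EqOn h (fun t => f (2*t)) (Icc 0 (1/2 : ℝ)) := by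
    intro t htm; simp only [hh]; rw [if_pos htm.2]
  have heq2 : EqOn h (fun t => g (2*t - 1)) (Icc (1/2 : ℝ) 1) := by
    intro t htm
    simp only [hh]
    by_cases hc : t ≤ 1/2
    · have : t = 1/2 := le_antisymm hc htm.1
      subst this
      rw [if_pos le_rfl]
      norm_num [hg0]
    · rw [if_neg hc]
  have hm1 : MapsTo (fun t : ℝ => 2*t) (Icc 0 (1/2:ℝ)) (Icc 0 1) := by
    intro t htm; simp only [mem_Icc] at htm ⊢; constructor <;> linarith [htm.1, htm.2]
  have hm2 : MapsTo (fun t : ℝ => 2*t - 1) (Icc (1/2:ℝ) 1) (Icc 0 1) := by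
    intro t htm; simp only [mem_Icc] at htm ⊢; constructor <;> linarith [htm.1, htm.2]
  have hc1 : ContinuousOn (fun t : ℝ => f (2*t)) (Icc 0 (1/2:ℝ)) :=
    hf.comp (by fun_prop) hm1
  have hc2 : ContinuousOn (fun t : ℝ => g (2*t - 1)) (Icc (1/2:ℝ) 1) :=
    hg.comp (by fun_prop) hm2
  have hcover : Icc (0:ℝ) 1 = Icc 0 (1/2) ∪ Icc (1/2) 1 :=
    (Icc_union_Icc_eq_Icc (by norm_num) (by norm_num)).symm
  have hcont : ContinuousOn h (Icc 0 1) := by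
    rw [hcover]
    intro x hx
    have cwa1 : ContinuousWithinAt h (Icc 0 (1/2:ℝ)) x := by
      by_cases hx1 : x ∈ Icc (0:ℝ) (1/2)
      · exact (hc1.congr heq1) x hx1
      · exact continuousWithinAt_of_notMem_closure (by rwa [closure_Icc])
    have cwa2 : ContinuousWithinAt h (Icc (1/2:ℝ) 1) x := by
      by_cases hx2 : x ∈ Icc (1/2:ℝ) 1
      · exact (hc2.congr heq2) x hx2
      · exact continuousWithinAt_of_notMem_closure (by rwa [closure_Icc])
    exact cwa1.union cwa2
  refine ⟨h, hcont, ?_, ?_, ?_⟩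
  · simp only [hh]; norm_num; exact hf0
  · simp only [hh]; norm_num; exact hg1
  · have hsplit := eVariationOn.Icc_add_Icc h (s := (univ : Set ℝ))
      (show (0:ℝ) ≤ 1/2 by norm_num) (show (1:ℝ)/2 ≤ 1 by norm_num) (mem_univ _)
    simp only [univ_inter] at hsplit
    have hb1 : eVariationOn h (Icc 0 (1/2:ℝ)) ≤ ENNReal.ofReal r := by
      rw [eVariationOn.eq_of_eqOn heq1]
      calc eVariationOn (f ∘ fun t : ℝ => 2*t) (Icc 0 (1/2:ℝ))
          ≤ eVariationOn f (Icc 0 1) := by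
            refine eVariationOn.comp_le_of_monotoneOn f _ ?_ hm1
            intro a _ b _ hab; dsimp only; linarith
        _ ≤ ENNReal.ofReal r := hflen
    have hb2 : eVariationOn h (Icc (1/2:ℝ) 1) ≤ ENNReal.ofReal s := by
      rw [eVariationOn.eq_of_eqOn heq2]
      calc eVariationOn (g ∘ fun t : ℝ => 2*t - 1) (Icc (1/2:ℝ) 1)
          ≤ eVariationOn g (Icc 0 1) := by
            refine eVariationOn.comp_le_of_monotoneOn g _ ?_ hm2
            intro a _ b _ hab; dsimp only; linarith
        _ ≤ ENNReal.ofReal s := hglen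
    calc pathLength h = eVariationOn h (Icc 0 (1/2:ℝ)) + eVariationOn h (Icc (1/2:ℝ) 1) := by
          rw [pathLength, ← hsplit]
      _ ≤ ENNReal.ofReal r + ENNReal.ofReal s := add_le_add hb1 hb2
      _ = ENNReal.ofReal (r + s) := (ENNReal.ofReal_add hr hs).symm

lemma PathDistGE.symm' {X Y : Set M} {K : ℝ} (h : PathDistGE X Y K) : PathDistGE Y X K := by
  rintro f ⟨hc, h0, h1⟩
  have hmaps : MapsTo (fun s : ℝ => 1 - s) (Icc 0 1) (Icc 0 1) := by
    intro t htm; simp only [mem_Icc] at htm ⊢; constructor <;> linarith [htm.1, htm.2]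
  have hpath : IsPathFromTo (fun s => f (1 - s)) X Y :=
    ⟨hc.comp (by fun_prop) hmaps, by norm_num [h1], by norm_num [h0]⟩
  refine (h _ hpath).trans ?_
  calc pathLength (fun s => f (1 - s))
      = eVariationOn (f ∘ fun s : ℝ => 1 - s) (Icc 0 1) := rfl
    _ ≤ eVariationOn f (Icc 0 1) := by
        refine eVariationOn.comp_le_of_antitoneOn f _ ?_ hmaps
        intro a _ b _ hab; dsimp only; linarith
    _ = pathLength f := rfl

lemma joinedIn_image {f : ℝ → M} (hf : ContinuousOn f (Icc 0 1)) {a b : ℝ}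
    (ha : a ∈ Icc (0:ℝ) 1) (hb : b ∈ Icc (0:ℝ) 1) :
    JoinedIn (f '' Icc 0 1) (f a) (f b) := by
  have hmem : ∀ p : unitInterval, a + (p : ℝ) * (b - a) ∈ Icc (0:ℝ) 1 := by
    intro p
    simp only [mem_Icc] at ha hb ⊢
    have hp1 : (0:ℝ) ≤ p := p.2.1
    have hp2 : (p:ℝ) ≤ 1 := p.2.2
    constructor
    · nlinarith [mul_nonneg (by linarith : (0:ℝ) ≤ 1 - (p:ℝ)) ha.1, mul_nonneg hp1 hb.1]
    · nlinarith [mul_nonneg (by linarith : (0:ℝ) ≤ 1 - (p:ℝ)) (by linarith : (0:ℝ) ≤ 1 - a),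
        mul_nonneg hp1 (by linarith : (0:ℝ) ≤ 1 - b)]
  refine ⟨⟨⟨fun p => f (a + (p:ℝ) * (b - a)), ?_⟩, ?_, ?_⟩, ?_⟩
  · exact hf.comp_continuous (by fun_prop) hmem
  · show f (a + ((0 : unitInterval) : ℝ) * (b - a)) = f a
    norm_num
  · show f (a + ((1 : unitInterval) : ℝ) * (b - a)) = f b
    norm_num
  · intro p; exact ⟨_, hmem p, rfl⟩

lemma merged_pathConn {S T : Set M} (hS : IsPathConnSet S) (hT : IsPathConnSet T)
    {f : ℝ → M} (hf : ContinuousOn f (Icc 0 1)) (h0 : f 0 ∈ S) (h1 : f 1 ∈ T) :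
    IsPathConnSet (S ∪ T ∪ f '' Icc 0 1) := by
  set U := S ∪ T ∪ f '' Icc 0 1 with hU
  have hSU : S ⊆ U := fun x hx => Or.inl (Or.inl hx)
  have hTU : T ⊆ U := fun x hx => Or.inl (Or.inr hx)
  have hIU : f '' Icc 0 1 ⊆ U := fun x hx => Or.inr hx
  have hub : ∀ x ∈ U, JoinedIn U x (f 0) := by
    rintro x (⟨hx | hx⟩ | ⟨t, ht, rfl⟩)
    · exact (hS x hx (f 0) h0).mono hSU
    · exact ((hT x hx (f 1) h1).mono hTU).trans
        (((joinedIn_image hf (by norm_num) (by norm_num)).mono hIU))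
    · exact (joinedIn_image hf ht (by norm_num)).mono hIU
  intro x hx y hy
  exact (hub x hx).trans (hub y hy).symm

lemma merge_aux (ε : ℝ) (hε : 0 < ε) :
    ∀ N : ℕ, ∀ F : Finset (Set M), F.card ≤ N → F.Nonempty →
      (∀ S ∈ F, IsPathConnSet S) →
      ∃ G : Finset (Set M), G.Nonempty ∧ G.card ≤ F.card ∧
        (∀ S ∈ G, IsPathConnSet S) ∧
        (∀ S ∈ G, ∀ T ∈ G, S ≠ T → PathDistGE S T ε) ∧
        (∀ S ∈ F, S ⊆ ⋃ T ∈ G, T) ∧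
        (∀ S ∈ G, S ⊆ ⋃ T ∈ F, pathNbhd T (((F.card - G.card : ℕ) : ℝ) * ε)) := by
  intro N
  induction N with
  | zero =>
    intro F hc hne _
    exact absurd (Finset.card_pos.mpr hne) (by omega)
  | succ N ih =>
    intro F hcard hne hconn
    classical
    by_cases hsep : ∀ S ∈ F, ∀ T ∈ F, S ≠ T → PathDistGE S T ε
    · refine ⟨F, hne, le_rfl, hconn, hsep, ?_, ?_⟩
      · intro S hS x hx
        simp only [mem_iUnion, exists_prop]
        exact ⟨S, hS, hx⟩
      · intro S hS x hx
        simp only [mem_iUnion, exists_prop]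
        exact ⟨S, hS, subset_pathNbhd' _ hx⟩
    · push_neg at hsep
      obtain ⟨S, hSF, T, hTF, hST, hsep⟩ := hsep
      rw [PathDistGE] at hsep
      push_neg at hsep
      obtain ⟨f, ⟨hfc, hf0, hf1⟩, hflen⟩ := hsep
      set U : Set M := S ∪ T ∪ f '' Icc 0 1 with hUdef
      set F' : Finset (Set M) := insert U ((F.erase S).erase T) with hF'def
      have h2 : 2 ≤ F.card := Finset.one_lt_card.mpr ⟨S, hSF, T, hTF, hST⟩
      have hTe : T ∈ F.erase S := Finset.mem_erase.mpr ⟨fun h => hST h.symm, hTF⟩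
      have hee : ((F.erase S).erase T).card = F.card - 2 := by
        rw [Finset.card_erase_of_mem hTe, Finset.card_erase_of_mem hSF]
        omega
      have hcard' : F'.card ≤ F.card - 1 := by
        have h3 := Finset.card_insert_le U ((F.erase S).erase T)
        show (insert U ((F.erase S).erase T)).card ≤ F.card - 1
        omega
      have hF'ne : F'.Nonempty := Finset.insert_nonempty _ _
      have hconn' : ∀ V ∈ F', IsPathConnSet V := by
        intro V hV
        rcases Finset.mem_insert.mp hV with rfl | hV
        · exact merged_pathConn (hconn S hSF) (hconn T hTF) hfc hf0 hf1
        · exact hconn V (Finset.mem_of_mem_erase (Finset.mem_of_mem_erase hV))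
      obtain ⟨G, hGne, hGcard, hGconn, hGsep, hGcover, hGnbhd⟩ :=
        ih F' (by omega) hF'ne hconn'
      have hGF : G.card ≤ F.card - 1 := hGcard.trans hcard'
      have hU1 : U ∈ F' := Finset.mem_insert_self _ _
      refine ⟨G, hGne, by omega, hGconn, hGsep, ?_, ?_⟩
      · intro W hWF
        by_cases hWS : W = S
        · subst hWS
          exact (fun x hx => (hGcover U hU1) (Or.inl (Or.inl hx)))
        · by_cases hWT : W = T
          · subst hWT
            exact (fun x hx => (hGcover U hU1) (Or.inl (Or.inr hx)))
          · exact hGcover W (Finset.mem_insert_of_mem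
              (Finset.mem_erase.mpr ⟨hWT, Finset.mem_erase.mpr ⟨hWS, hWF⟩⟩))
      · intro W hWG
        have hr'0 : (0:ℝ) ≤ ((F'.card - G.card : ℕ) : ℝ) * ε := by positivity
        have hr'r : ((F'.card - G.card : ℕ) : ℝ) * ε ≤ ((F.card - G.card : ℕ) : ℝ) * ε := by
          have hnat : F'.card - G.card ≤ F.card - G.card := by omega
          exact mul_le_mul_of_nonneg_right (by exact_mod_cast hnat) hε.le
        have hr'εr : ((F'.card - G.card : ℕ) : ℝ) * ε + ε ≤ ((F.card - G.card : ℕ) : ℝ) * ε := by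
          have hnat : (F'.card - G.card) + 1 ≤ F.card - G.card := by omega
          have hcast : ((F'.card - G.card : ℕ) : ℝ) + 1 ≤ ((F.card - G.card : ℕ) : ℝ) := by
            exact_mod_cast hnat
          nlinarith
        intro x hx
        have hx' := hGnbhd W hWG hx
        simp only [mem_iUnion, exists_prop] at hx' ⊢
        obtain ⟨V, hV, hxV⟩ := hx'
        rcases Finset.mem_insert.mp hV with rfl | hVe
        · have hUsub : U ⊆ pathNbhd S ε ∪ pathNbhd T ε := by
            rw [hUdef]
            rintro y (⟨hy | hy⟩ | ⟨t, ht, rfl⟩)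
            · exact Or.inl (subset_pathNbhd' ε hy)
            · exact Or.inr (subset_pathNbhd' ε hy)
            · exact Or.inr (pathNbhd_mono_set (singleton_subset_iff.mpr hf1)
                (image_subset_pathNbhd_endpoint hfc hflen.le ht))
          have hx2 : x ∈ pathNbhd (pathNbhd S ε ∪ pathNbhd T ε)
              (((F'.card - G.card : ℕ) : ℝ) * ε) := pathNbhd_mono_set hUsub hxV
          rcases pathNbhd_union hx2 with h | h
          · exact ⟨S, hSF, pathNbhd_mono_r hr'εr (pathNbhd_trans hr'0 hε.le h)⟩
          · exact ⟨T, hTF, pathNbhd_mono_r hr'εr (pathNbhd_trans hr'0 hε.le h)⟩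
        · have hVF : V ∈ F := Finset.mem_of_mem_erase (Finset.mem_of_mem_erase hVe)
          exact ⟨V, hVF, pathNbhd_mono_r hr'r hxV⟩

/-- **Merging close path-connected sets.** Given path-connected sets `X 1, …, X n` in a length
space, for every `ε > 0` there are `1 ≤ m ≤ n` path-connected sets `Y 1, …, Y m`, pairwise at
distance at least `ε`, with `⋃ X i ⊆ ⋃ Y j ⊆ ⋃ N^{(n-m)ε}[X i]`. -/
theorem merge_close_path_connected_sets {M : Type*} [MetricSpace M] (hM : IsLengthSpace M)
    (n : ℕ) (hn : 1 ≤ n) (X : Fin n → Set M) (hX : ∀ i, IsPathConnSet (X i))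
    (ε : ℝ) (hε : 0 < ε) :
    ∃ m : ℕ, 1 ≤ m ∧ m ≤ n ∧ ∃ Y : Fin m → Set M,
      (∀ j, IsPathConnSet (Y j)) ∧
      (∀ j j', j ≠ j' → PathDistGE (Y j) (Y j') ε) ∧
      (⋃ i, X i) ⊆ (⋃ j, Y j) ∧
      (⋃ j, Y j) ⊆ ⋃ i, pathNbhd (X i) (((n : ℝ) - m) * ε) := by
  classical
  set F : Finset (Set M) := Finset.image X Finset.univ with hFdef
  have hne : F.Nonempty := by
    refine ⟨X ⟨0, hn⟩, ?_⟩
    simp [hFdef]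
  have hcardn : F.card ≤ n := by
    calc F.card ≤ (Finset.univ : Finset (Fin n)).card := Finset.card_image_le
      _ = n := by simp
  have hconn : ∀ S ∈ F, IsPathConnSet S := by
    intro S hS
    simp only [hFdef, Finset.mem_image] at hS
    obtain ⟨i, _, rfl⟩ := hS
    exact hX i
  obtain ⟨G, hGne, hGcard, hGconn, hGsep, hGcover, hGnbhd⟩ :=
    merge_aux ε hε F.card F le_rfl hne hconn
  have hm1 : 1 ≤ G.card := Finset.card_pos.mpr hGne
  refine ⟨G.card, hm1, hGcard.trans hcardn, fun j => ((G.equivFin.symm j : G) : Set M),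
    ?_, ?_, ?_, ?_⟩
  · intro j
    exact hGconn _ (G.equivFin.symm j).2
  · intro j j' hjj'
    refine hGsep _ (G.equivFin.symm j).2 _ (G.equivFin.symm j').2 ?_
    intro hEq
    exact hjj' (by
      have : G.equivFin.symm j = G.equivFin.symm j' := Subtype.ext hEq
      simpa using G.equivFin.symm.injective this)
  · intro x hx
    simp only [mem_iUnion] at hx ⊢
    obtain ⟨i, hxi⟩ := hx
    have hXiF : X i ∈ F := by simp [hFdef]
    have := hGcover (X i) hXiF hxi
    simp only [mem_iUnion, exists_prop] at this
    obtain ⟨T, hTG, hxT⟩ := this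
    refine ⟨G.equivFin ⟨T, hTG⟩, ?_⟩
    simpa using hxT
  · intro x hx
    simp only [mem_iUnion] at hx ⊢
    obtain ⟨j, hxj⟩ := hx
    have hmem := hGnbhd _ (G.equivFin.symm j).2 hxj
    simp only [mem_iUnion, exists_prop] at hmem
    obtain ⟨T, hTF, hxT⟩ := hmem
    simp only [hFdef, Finset.mem_image] at hTF
    obtain ⟨i, _, rfl⟩ := hTF
    refine ⟨i, pathNbhd_mono_r ?_ hxT⟩
    have hsub : ((F.card - G.card : ℕ) : ℝ) = (F.card : ℝ) - G.card := by
      have : G.card ≤ F.card := hGcard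
      push_cast [Nat.cast_sub this]
      ring
    rw [hsub]
    have : (F.card : ℝ) ≤ n := by exact_mod_cast hcardn
    nlinarith
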